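/- Let n and k be natural numbers with base-5 expansions n = n_0 + n_1·5 + n_2·5² + ⋯ and k = k_0 + k_1·5 + k_2·5² + ⋯ where 0 ≤ n_i, k_i < 5. Then 5 divides the fibonomial coefficient C(n,k)_F if and only if 5 divides the product C(n_0,k_0)_F · C(n_1,k_1)_F · C(n_2,k_2)_F ⋯ (where all but finitely many factors equal 1, and C(a,b)_F = 0 when b > a). -/

import Mathlib

/-!
Since `F_{5n} = 5 F_n (5 F_n⁴ + 5 (-1)ⁿ F_n² + 1)` and `5 ∣ F_n ↔ 5 ∣ n`, the `5`-adic valuation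
of `F_n` equals that of `n`. Hence `n!_F` and `n!` have the same `5`-adic valuation, and so do
`C(n,k)_F` and `C(n,k)`: the criterion is Lucas' theorem for ordinary binomial coefficients.
-/

/-- The fibotorial `n!_F = F_n · F_{n-1} ⋯ F_1`, with `0!_F = 1`. -/
def fibotorial (n : ℕ) : ℕ := ∏ i ∈ Finset.range n, Nat.fib (i + 1)

/-- The fibonomial coefficient `C(n,k)_F = n!_F / (k!_F · (n-k)!_F)` for `k ≤ n`,
and `0` otherwise. -/
def fibnomial (n k : ℕ) : ℕ :=
  if k ≤ n then fibotorial n / (fibotorial k * fibotorial (n - k)) else 0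

theorem Int.fib_five_mul (n : ℤ) :
    fib (5 * n) = 5 * fib n * (5 * (fib n ^ 4 + (-1) ^ n.natAbs * fib n ^ 2) + 1) := by
  have h5 := fib_add (4 * n) n
  have h4 := fib_two_mul (2 * n)
  have h3 := fib_add (2 * n) (2 * n - 1)
  have h1 := fib_add_two (2 * n - 1)
  have h0 := fib_add_two (n - 1)
  have cassini := fib_succ_mul_fib_pred_sub_fib_sq n
  have hs : ((-1 : ℤ) ^ n.natAbs) ^ 2 = 1 := by rw [← pow_mul, mul_comm, pow_mul]; simp
  rw [show 4 * n + n = 5 * n by ring] at h5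
  rw [show 2 * (2 * n) = 4 * n by ring] at h4
  rw [show 2 * n + (2 * n - 1) = 4 * n - 1 by ring, sub_add_cancel] at h3
  rw [show 2 * n - 1 + 2 = 2 * n + 1 by ring, sub_add_cancel] at h1
  rw [show n - 1 + 2 = n + 1 by ring, sub_add_cancel] at h0
  rw [h5, h3, h4, eq_sub_of_add_eq h1.symm, fib_two_mul, fib_two_mul_add_one]
  rw [eq_sub_of_add_eq h0.symm] at cassini
  set x := fib n
  set y := fib (n + 1)
  set s := (-1 : ℤ) ^ n.natAbs
  -- `y ^ 2 - x * y - x ^ 2 = s` (Cassini) and `s ^ 2 = 1` are the only relations needed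
  linear_combination (25 * x ^ 3 + 5 * x * (y ^ 2 - x * y - x ^ 2 + s)) * cassini + 5 * x * hs

namespace Nat

instance fact_prime_five : Fact (Nat.Prime 5) := ⟨prime_five⟩

theorem padicValNat_five_fib_five_mul {n : ℕ} (hn : n ≠ 0) :
    padicValNat 5 (fib (5 * n)) = padicValNat 5 (fib n) + 1 := by
  set u : ℤ := 5 * (Int.fib n ^ 4 + (-1) ^ (n : ℤ).natAbs * Int.fib n ^ 2) + 1
  have hu : ¬ (5 : ℤ) ∣ u := by omega
  have hfib : Int.fib n ≠ 0 := by simpa using hn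
  rw [← padicValInt.of_nat, ← padicValInt.of_nat, ← Int.fib_natCast, ← Int.fib_natCast,
    Nat.cast_mul, Nat.cast_ofNat, Int.fib_five_mul, mul_comm 5,
    padicValInt.mul (mul_ne_zero hfib (by norm_num)) (by omega), padicValInt.mul hfib (by norm_num),
    padicValInt.eq_zero_of_not_dvd hu, add_zero, add_left_cancel_iff]
  exact padicValInt.self (p := 5) (by norm_num)

theorem five_dvd_fib_iff {n : ℕ} : 5 ∣ fib n ↔ 5 ∣ n := by
  refine ⟨fun h => ?_, fun h => fib_dvd 5 n h⟩
  have hgcd : fib (gcd 5 n) = 5 := by rw [fib_gcd]; exact Nat.gcd_eq_left h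
  rcases coprime_or_dvd_of_prime prime_five n with hcop | hdvd
  · rw [hcop.gcd_eq_one] at hgcd
    simp at hgcd
  · exact hdvd

theorem padicValNat_five_fib (n : ℕ) : padicValNat 5 (fib n) = padicValNat 5 n := by
  induction n using Nat.strong_induction_on with
  | _ n ih =>
  by_cases h5 : 5 ∣ n
  · obtain ⟨m, rfl⟩ := h5
    rcases eq_or_ne m 0 with rfl | hm
    · simp
    rw [padicValNat_five_fib_five_mul hm, ih m (by omega), padicValNat.mul (by norm_num) hm,
      padicValNat_self, add_comm]
  · rw [padicValNat.eq_zero_of_not_dvd h5,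
      padicValNat.eq_zero_of_not_dvd (mt five_dvd_fib_iff.mp h5)]

end Nat

open Nat

theorem fibotorial_zero : fibotorial 0 = 1 := rfl

theorem fibotorial_succ (n : ℕ) : fibotorial (n + 1) = fibotorial n * fib (n + 1) :=
  Finset.prod_range_succ _ n

theorem fibotorial_pos (n : ℕ) : 0 < fibotorial n :=
  Finset.prod_pos fun i _ => fib_pos.mpr i.succ_pos

theorem fibotorial_mul_fibotorial_dvd (k l : ℕ) :
    fibotorial k * fibotorial l ∣ fibotorial (k + l) := by
  induction k generalizing l with
  | zero => simp [fibotorial_zero]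
  | succ k ihk =>
    induction l with
    | zero => simp [fibotorial_zero]
    | succ l ihl =>
      have hsucc : fibotorial (k + 1 + (l + 1)) =
          fibotorial (k + 1 + l) * (fib (k + 1) * fib l + fib (k + 2) * fib (l + 1)) := by
        rw [← add_assoc, fibotorial_succ, fib_add]
      rw [hsucc, mul_add]
      apply dvd_add
      · calc fibotorial (k + 1) * fibotorial (l + 1)
            = fibotorial k * fibotorial (l + 1) * fib (k + 1) := by rw [fibotorial_succ]; ring
          _ ∣ fibotorial (k + (l + 1)) * fib (k + 1) * fib l :=
            dvd_mul_of_dvd_left (mul_dvd_mul_right (ihk (l + 1)) _) _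
          _ = fibotorial (k + 1 + l) * (fib (k + 1) * fib l) := by
            rw [show k + (l + 1) = k + 1 + l by omega]; ring
      · calc fibotorial (k + 1) * fibotorial (l + 1)
            = fibotorial (k + 1) * fibotorial l * fib (l + 1) := by rw [fibotorial_succ l]; ring
          _ ∣ fibotorial (k + 1 + l) * fib (l + 1) * fib (k + 2) :=
            dvd_mul_of_dvd_left (mul_dvd_mul_right ihl _) _
          _ = fibotorial (k + 1 + l) * (fib (k + 2) * fib (l + 1)) := by ring

theorem padicValNat_five_fibotorial (n : ℕ) :
    padicValNat 5 (fibotorial n) = padicValNat 5 n ! := by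
  induction n with
  | zero => rfl
  | succ n ih =>
    rw [fibotorial_succ, factorial_succ,
      padicValNat.mul (fibotorial_pos n).ne' (fib_pos.mpr n.succ_pos).ne',
      padicValNat.mul n.succ_ne_zero n.factorial_ne_zero, ih, padicValNat_five_fib, add_comm]

theorem fibnomial_add_mul_fibotorial_mul_fibotorial (i j : ℕ) :
    fibnomial (i + j) j * fibotorial i * fibotorial j = fibotorial (i + j) := by
  rw [fibnomial, if_pos (le_add_left j i), Nat.add_sub_cancel, mul_assoc,
    mul_comm (fibotorial i)]
  exact Nat.div_mul_cancel (add_comm i j ▸ fibotorial_mul_fibotorial_dvd j i)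

theorem fibnomial_pos {n k : ℕ} (h : k ≤ n) : 0 < fibnomial n k := by
  obtain ⟨i, rfl⟩ := exists_add_of_le h
  rw [add_comm k i]
  refine Nat.pos_of_ne_zero fun h0 => (fibotorial_pos (i + k)).ne' ?_
  rw [← fibnomial_add_mul_fibotorial_mul_fibotorial i k, h0, zero_mul, zero_mul]

theorem padicValNat_five_fibnomial (n k : ℕ) :
    padicValNat 5 (fibnomial n k) = padicValNat 5 (n.choose k) := by
  rcases le_or_gt k n with hkn | hnk
  · have hfib0 := (fibnomial_pos hkn).ne'
    have hchoose0 := (choose_pos hkn).ne'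
    obtain ⟨i, rfl⟩ := exists_add_of_le hkn
    rw [add_comm k i] at *
    have hfib := congrArg (padicValNat 5) (fibnomial_add_mul_fibotorial_mul_fibotorial i k)
    have hchoose := congrArg (padicValNat 5) (add_choose_mul_factorial_mul_factorial i k)
    rw [padicValNat.mul (mul_ne_zero hfib0 (fibotorial_pos i).ne') (fibotorial_pos k).ne',
      padicValNat.mul hfib0 (fibotorial_pos i).ne'] at hfib
    rw [padicValNat.mul (mul_ne_zero hchoose0 i.factorial_ne_zero) k.factorial_ne_zero,
      padicValNat.mul hchoose0 i.factorial_ne_zero] at hchoose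
    simp only [padicValNat_five_fibotorial] at hfib
    omega
  · simp [fibnomial, hnk.not_ge, choose_eq_zero_of_lt hnk]

theorem five_dvd_fibnomial_iff_five_dvd_choose (n k : ℕ) :
    5 ∣ fibnomial n k ↔ 5 ∣ n.choose k := by
  rcases le_or_gt k n with hkn | hnk
  · rw [dvd_iff_padicValNat_ne_zero (fibnomial_pos hkn).ne',
      dvd_iff_padicValNat_ne_zero (choose_pos hkn).ne', padicValNat_five_fibnomial]
  · simp [fibnomial, hnk.not_ge, choose_eq_zero_of_lt hnk]

/-- Lucas-type divisibility criterion mod 5 for fibonomial coefficients: with base-5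
digits `n_i = n / 5^i % 5` and `k_i = k / 5^i % 5`, we have `5 ∣ C(n,k)_F` iff `5`
divides the product of the digitwise fibonomial coefficients.  Any `N` with
`n, k < 5^N` covers all nonzero digits (all further factors are `C(0,0)_F = 1`). -/
theorem five_dvd_fibnomial_iff_digits (n k N : ℕ) (hn : n < 5 ^ N) (hk : k < 5 ^ N) :
    5 ∣ fibnomial n k ↔
      5 ∣ ∏ i ∈ Finset.range N, fibnomial (n / 5 ^ i % 5) (k / 5 ^ i % 5) := by
  rw [five_dvd_fibnomial_iff_five_dvd_choose,
    (Choose.choose_modEq_prod_range_choose_nat hn hk).dvd_iff dvd_rfl,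
    prime_five.prime.dvd_finsetProd_iff, prime_five.prime.dvd_finsetProd_iff]
  simp only [five_dvd_fibnomial_iff_five_dvd_choose]
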